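/- arXiv:2005.11913 — 2 statements merged into one kernel-verified Lean document; each statement's English description precedes it below -/
import Mathlib

section
/- For a prime p and positive integer k, the integer (p^k - 1)! / [ (p^{k-1})! · (p^{k-2})! · ... · p! · 1! ]^{p-1} is an integer not divisible by p. -/
/-!
The denominator is the multinomial coefficient splitting `p ^ k - 1 = (p - 1) ∑_{j<k} p ^ j`
into `p - 1` blocks of each size `p ^ j`, so it divides the numerator. By Legendre,
`v_p((p ^ j)!) = 1 + p + ⋯ + p ^ (j - 1)`, and both numerator and denominator have `p`-adic
valuation `∑_{j<k} p ^ j - k`: the numerator because `(p ^ k)! = p ^ k (p ^ k - 1)!`, the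
denominator because `(p - 1) (1 + p + ⋯ + p ^ (j - 1)) = p ^ j - 1`.
-/

open Finset Nat

theorem pow_prod_factorial_dvd_factorial_mul_sum {ι : Type*} (s : Finset ι) (f : ι → ℕ)
    (m : ℕ) : (∏ i ∈ s, (f i)!) ^ m ∣ (m * ∑ i ∈ s, f i)! := by
  simpa [prod_product, sum_product, prod_pow, mul_sum, mul_comm] using
    prod_factorial_dvd_factorial_sum (s ×ˢ range m) (fun x => f x.1)

section Valuation

variable {p : ℕ} [hp : Fact p.Prime]

theorem not_dvd_div_of_padicValNat_eq {a b : ℕ} (hab : a ∣ b) (hb : b ≠ 0)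
    (h : padicValNat p a = padicValNat p b) : ¬ p ∣ b / a := by
  have hval : padicValNat p (b / a) = 0 := by
    rw [padicValNat.div_of_dvd hab, h, Nat.sub_self]
  have hquot : b / a ≠ 0 :=
    (Nat.div_ne_zero_iff_of_dvd hab).mpr ⟨hb, ne_zero_of_dvd_ne_zero hb hab⟩
  rcases padicValNat.eq_zero_iff.mp hval with h1 | h0 | hndvd
  · exact absurd h1 hp.out.ne_one
  · exact absurd h0 hquot
  · exact hndvd

theorem padicValNat_finset_prod {ι : Type*} (s : Finset ι) {f : ι → ℕ}
    (hf : ∀ i ∈ s, f i ≠ 0) :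
    padicValNat p (∏ i ∈ s, f i) = ∑ i ∈ s, padicValNat p (f i) := by
  simp only [← factorization_def _ hp.out, factorization_prod hf, Finsupp.finsetSum_apply]

theorem padicValNat_factorial_pow (j : ℕ) :
    padicValNat p (p ^ j)! = ∑ i ∈ range j, p ^ i := by
  induction j with
  | zero => simp
  | succ j ih => rw [pow_succ', padicValNat_factorial_mul, ih, sum_range_succ]

theorem padicValNat_factorial_pow_sub_one (k : ℕ) :
    padicValNat p (p ^ k - 1)! = ∑ i ∈ range k, p ^ i - k := by
  have hpk : p ^ k ≠ 0 := pow_ne_zero k hp.out.ne_zero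
  have h := padicValNat_factorial_pow (p := p) k
  rw [← mul_factorial_pred hpk, padicValNat.mul hpk (factorial_ne_zero _),
    padicValNat.prime_pow] at h
  omega

theorem padicValNat_pow_prod_factorial_pow (k : ℕ) :
    padicValNat p ((∏ j ∈ range k, (p ^ j)!) ^ (p - 1)) = ∑ i ∈ range k, p ^ i - k := by
  have hone : ∀ j ∈ range k, 1 ≤ p ^ j := fun j _ => Nat.one_le_pow _ _ hp.out.pos
  rw [padicValNat.pow, padicValNat_finset_prod _ fun j _ => factorial_ne_zero _, mul_sum]
  simp only [padicValNat_factorial_pow, mul_comm (p - 1),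
    geom_sum_mul_of_one_le hp.out.one_lt.le]
  rw [sum_tsub_distrib _ hone, sum_const, card_range, smul_eq_mul, mul_one]

end Valuation

theorem multinomial_L_not_div_general (p k : ℕ) (hp : p.Prime) :
    ((∏ j ∈ Finset.range k, Nat.factorial (p ^ j)) ^ (p - 1)) ∣ Nat.factorial (p ^ k - 1) ∧
    ¬ p ∣ (Nat.factorial (p ^ k - 1) /
      ((∏ j ∈ Finset.range k, Nat.factorial (p ^ j)) ^ (p - 1))) := by
  have := Fact.mk hp
  have hdvd : (∏ j ∈ range k, (p ^ j)!) ^ (p - 1) ∣ (p ^ k - 1)! := by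
    simpa only [mul_comm (p - 1), geom_sum_mul_of_one_le hp.one_lt.le] using
      pow_prod_factorial_dvd_factorial_mul_sum (range k) (p ^ ·) (p - 1)
  refine ⟨hdvd, not_dvd_div_of_padicValNat_eq hdvd (factorial_ne_zero _) ?_⟩
  rw [padicValNat_pow_prod_factorial_pow, padicValNat_factorial_pow_sub_one]

/-- For a prime `p` and `k ≥ 1`, the multinomial coefficient
`(p^k - 1)! / [(p^{k-1})! ⋯ p! 1!]^{p-1}` is an integer not divisible by `p`. -/
theorem multinomial_L_not_div (p k : ℕ) (hp : p.Prime) (hk : 1 ≤ k) :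
    ((∏ j ∈ Finset.range k, Nat.factorial (p ^ j)) ^ (p - 1)) ∣ Nat.factorial (p ^ k - 1) ∧
    ¬ p ∣ (Nat.factorial (p ^ k - 1) /
      ((∏ j ∈ Finset.range k, Nat.factorial (p ^ j)) ^ (p - 1))) :=
  multinomial_L_not_div_general p k hp
end

section
/- Let m, n, l_1, ..., l_m be positive integers with n = l_1 + ... + l_m + 1, and let Δ_{m,n}^{1;L} be the associated multiple chessboard complex. Then every face of cardinality n - 2 (codimension 1) is contained in exactly two maximal faces. -/
/-!
Since `n = ∑ lᵢ + 1`, a face can be enlarged as long as it has fewer than `∑ lᵢ` squares (a free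
column always exists), so the maximal faces are exactly the faces with `∑ lᵢ` squares. A face `S`
with `∑ lᵢ - 1` squares falls short of its row capacities by exactly one, in a single row `i₀`,
and leaves exactly two columns free. A maximal face containing `S` adds one square, which must lie
in row `i₀` and in a free column; conversely each of the two free columns gives one.
-/

/-- A face of the multiple chessboard complex `Δ_{m,n}^{1;L}`. -/
def IsChessFace (m n : ℕ) (l : Fin m → ℕ) (S : Finset (Fin m × Fin n)) : Prop :=
  (∀ j : Fin n, (S.filter fun x => x.2 = j).card ≤ 1) ∧
  (∀ i : Fin m, (S.filter fun x => x.1 = i).card ≤ l i)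

open Finset

theorem eq_of_lt_of_sum_eq_add_one {ι : Type*} [Fintype ι] {f g : ι → ℕ}
    (hfg : ∀ i, f i ≤ g i) (hsum : ∑ i, g i = ∑ i, f i + 1) {i i' : ι}
    (hi : f i < g i) (hi' : f i' < g i') : i = i' := by
  classical
  by_contra hne
  have hrest : ∑ k ∈ univ.erase i, f k < ∑ k ∈ univ.erase i, g k :=
    sum_lt_sum (fun k _ => hfg k) ⟨i', mem_erase.2 ⟨Ne.symm hne, mem_univ i'⟩, hi'⟩
  rw [← add_sum_erase univ f (mem_univ i), ← add_sum_erase univ g (mem_univ i)] at hsum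
  omega

section ChessFace

variable {m n : ℕ} {l : Fin m → ℕ} {S T : Finset (Fin m × Fin n)}

theorem card_eq_sum_card_filter_fst (S : Finset (Fin m × Fin n)) :
    S.card = ∑ i, (S.filter fun x => x.1 = i).card :=
  card_eq_sum_card_fiberwise fun _ _ => mem_univ _

theorem exists_card_filter_fst_lt (hS : S.card < ∑ i, l i) :
    ∃ i, (S.filter fun x => x.1 = i).card < l i := by
  obtain ⟨i, -, hi⟩ := exists_lt_of_sum_lt (card_eq_sum_card_filter_fst S ▸ hS)
  exact ⟨i, hi⟩

theorem IsChessFace.card_le_sum (hT : IsChessFace m n l T) : T.card ≤ ∑ i, l i :=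
  card_eq_sum_card_filter_fst T ▸ sum_le_sum fun i _ => hT.2 i

theorem IsChessFace.card_image_snd (hS : IsChessFace m n l S) :
    (S.image Prod.snd).card = S.card :=
  card_image_of_injOn fun x hx y hy hxy =>
    card_le_one.1 (hS.1 x.2) x (mem_filter.2 ⟨hx, rfl⟩) y (mem_filter.2 ⟨hy, hxy.symm⟩)

theorem IsChessFace.insert_iff (hS : IsChessFace m n l S) {x : Fin m × Fin n} (hx : x ∉ S) :
    IsChessFace m n l (insert x S) ↔
      x.2 ∉ S.image Prod.snd ∧ (S.filter fun y => y.1 = x.1).card < l x.1 := by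
  have hcol : (S.filter fun y => y.2 = x.2) = ∅ ↔ x.2 ∉ S.image Prod.snd := by
    simp only [filter_eq_empty_iff, mem_image, not_exists, not_and]
  constructor
  · rintro ⟨hcols, hrows⟩
    have hc := hcols x.2
    have hr := hrows x.1
    rw [filter_insert, if_pos rfl, card_insert_of_notMem fun h => hx (mem_filter.1 h).1] at hc hr
    exact ⟨hcol.1 (card_eq_zero.1 (by omega)), by omega⟩
  · rintro ⟨hfree, hlt⟩
    refine ⟨fun j => ?_, fun i => ?_⟩
    · rw [filter_insert]
      split_ifs with h
      · subst h
        rw [hcol.2 hfree]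
        rfl
      · exact hS.1 j
    · rw [filter_insert]
      split_ifs with h
      · subst h
        exact (card_insert_le _ _).trans hlt
      · exact hS.2 i

theorem IsChessFace.exists_insert (hS : IsChessFace m n l S) (hle : ∑ i, l i ≤ n)
    (hlt : S.card < ∑ i, l i) : ∃ x ∉ S, IsChessFace m n l (insert x S) := by
  obtain ⟨j, -, hj⟩ : ∃ j ∈ (univ : Finset (Fin n)), j ∉ S.image Prod.snd :=
    exists_mem_notMem_of_card_lt_card (by rw [hS.card_image_snd, card_univ, Fintype.card_fin]; omega)
  obtain ⟨i, hi⟩ := exists_card_filter_fst_lt hlt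
  have hx : (i, j) ∉ S := fun h => hj (mem_image_of_mem Prod.snd h)
  exact ⟨(i, j), hx, (hS.insert_iff hx).2 ⟨hj, hi⟩⟩

theorem IsChessFace.maximal_iff (hT : IsChessFace m n l T) (hle : ∑ i, l i ≤ n) :
    (∀ U, IsChessFace m n l U → T ⊆ U → T = U) ↔ T.card = ∑ i, l i := by
  constructor
  · intro hmax
    by_contra hne
    obtain ⟨x, hx, hU⟩ := hT.exists_insert hle (hT.card_le_sum.lt_of_ne hne)
    exact hx (hmax _ hU (subset_insert x T) ▸ mem_insert_self x T)
  · intro hcard U hU hTU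
    exact eq_of_subset_of_card_le hTU (hcard ▸ hU.card_le_sum)

theorem IsChessFace.maximal_superset_iff (hS : IsChessFace m n l S) (hle : ∑ i, l i ≤ n)
    (hcard : S.card + 1 = ∑ i, l i) {i₀ : Fin m}
    (hi₀ : (S.filter fun x => x.1 = i₀).card < l i₀) (T : Finset (Fin m × Fin n)) :
    (IsChessFace m n l T ∧ (∀ U, IsChessFace m n l U → T ⊆ U → T = U) ∧ S ⊆ T) ↔
      ∃ j ∉ S.image Prod.snd, insert (i₀, j) S = T := by
  constructor
  · rintro ⟨hT, hmax, hST⟩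
    obtain ⟨x, hx, rfl⟩ :=
      exists_eq_insert_iff.2 ⟨hST, hcard.trans ((hT.maximal_iff hle).1 hmax).symm⟩
    obtain ⟨hfree, hrow⟩ := (hS.insert_iff hx).1 hT
    have hrow_eq : x.1 = i₀ := eq_of_lt_of_sum_eq_add_one hS.2
      (by rw [← card_eq_sum_card_filter_fst, hcard]) hrow hi₀
    exact ⟨x.2, hfree, by rw [← hrow_eq]⟩
  · rintro ⟨j, hj, rfl⟩
    have hx : (i₀, j) ∉ S := fun h => hj (mem_image_of_mem Prod.snd h)
    have hT := (hS.insert_iff hx).2 ⟨hj, hi₀⟩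
    refine ⟨hT, (hT.maximal_iff hle).2 ?_, subset_insert _ _⟩
    rw [card_insert_of_notMem hx, hcard]

end ChessFace

theorem chessboard_pseudomanifold_general (m n : ℕ) (hm : 1 ≤ m) (l : Fin m → ℕ)
    (hl : ∀ i, 1 ≤ l i) (hsum : n = (∑ i, l i) + 1)
    (S : Finset (Fin m × Fin n)) (hS : IsChessFace m n l S) (hcard : S.card = n - 2) :
    {T : Finset (Fin m × Fin n) | IsChessFace m n l T ∧
      (∀ U, IsChessFace m n l U → T ⊆ U → T = U) ∧ S ⊆ T}.ncard = 2 := by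
  have hpos : 1 ≤ ∑ i, l i :=
    (hl ⟨0, hm⟩).trans (single_le_sum (fun i _ => Nat.zero_le (l i)) (mem_univ _))
  have hS_card : S.card + 1 = ∑ i, l i := by omega
  obtain ⟨i₀, hi₀⟩ := exists_card_filter_fst_lt (l := l) (S := S) (by omega)
  have hset : {T : Finset (Fin m × Fin n) | IsChessFace m n l T ∧
      (∀ U, IsChessFace m n l U → T ⊆ U → T = U) ∧ S ⊆ T} =
      (fun j => insert (i₀, j) S) '' ↑(univ \ S.image Prod.snd) := by
    ext T
    simp only [Set.mem_ofPred_eq, hS.maximal_superset_iff (by omega) hS_card hi₀ T, Set.mem_image,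
      coe_sdiff, coe_univ, Set.mem_sdiff, Set.mem_univ, true_and, mem_coe]
  have hinj : Set.InjOn (fun j => insert (i₀, j) S) ↑(univ \ S.image Prod.snd) :=
    fun j hj j' _ h => (Prod.ext_iff.1 ((insert_inj fun hS' =>
      (mem_sdiff.1 hj).2 (mem_image_of_mem Prod.snd hS')).1 h)).2
  rw [hset, hinj.ncard_image, Set.ncard_coe_finset, card_univ_sdiff, Fintype.card_fin,
    hS.card_image_snd]
  omega

/-- Codimension-one pseudomanifold property: if `n = l_1 + ⋯ + l_m + 1`, every face of
`Δ_{m,n}^{1;L}` of cardinality `n - 2` is contained in exactly two maximal faces. -/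
theorem chessboard_pseudomanifold (m n : ℕ) (hm : 1 ≤ m) (hn : 1 ≤ n) (l : Fin m → ℕ)
    (hl : ∀ i, 1 ≤ l i) (hsum : n = (∑ i, l i) + 1)
    (S : Finset (Fin m × Fin n)) (hS : IsChessFace m n l S) (hcard : S.card = n - 2) :
    {T : Finset (Fin m × Fin n) | IsChessFace m n l T ∧
      (∀ U, IsChessFace m n l U → T ⊆ U → T = U) ∧ S ⊆ T}.ncard = 2 :=
  chessboard_pseudomanifold_general m n hm l hl hsum S hS hcard
end
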